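/- arXiv:1904.11856 — 8 statements merged into one kernel-verified Lean document; each statement's English description precedes it below -/
import Mathlib

section
/- Let Z = (Z₀,Z₁,Z₂,Z₃) ∈ C^4 satisfy ⟨Z,Z⟩ = 0, ⟨Z, conj(Z)⟩ = 2r² > 0 for some real r > 0, and Z₁ - iZ₂ ≠ 0, where ⟨·,·⟩ is the complex-bilinear extension of the Lorentzian form -x₀y₀ + x₁y₁ + x₂y₂ + x₃y₃. Define μ = (Z₁ - iZ₂)/2, a = (Z₀ + Z₃)/(Z₁ - iZ₂), b = (Z₀ - Z₃)/(Z₁ - iZ₂). Then a·conj(b) ≠ 1 and Z = μ·W(a,b) where W(a,b) = (a+b, 1+ab, i(1-ab), a-b). -/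
/-!
In the light-cone coordinates `u = Z₁ - iZ₂`, `v = Z₁ + iZ₂`, `p = Z₀ + Z₃`, `q = Z₀ - Z₃` the
null condition `⟨Z,Z⟩ = 0` reads `uv = pq`, so for `u ≠ 0` the vector `Z` is determined by
`u, p, q` and equals `(u/2) W(p/u, q/u)`. On the other hand `⟨μW(a,b), conj(μW(a,b))⟩` is the
perfect square `2|μ|²|1 - a b̄|²`, so positivity of `⟨Z, conj Z⟩` forces `a b̄ ≠ 1`.
-/

/-- Complex-bilinear extension of the Lorentzian form to `ℂ⁴`. -/
noncomputable def B (x y : Fin 4 → ℂ) : ℂ :=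
  -(x 0 * y 0) + x 1 * y 1 + x 2 * y 2 + x 3 * y 3

/-- The vector `W(a,b) = (a+b, 1+ab, i(1-ab), a-b)`. -/
noncomputable def W (a b : ℂ) : Fin 4 → ℂ :=
  ![a + b, 1 + a * b, Complex.I * (1 - a * b), a - b]

open Complex ComplexConjugate

theorem eq_smul_W_of_B_self_eq_zero {Z : Fin 4 → ℂ} (hZ : B Z Z = 0)
    (hu : Z 1 - I * Z 2 ≠ 0) :
    Z = ((Z 1 - I * Z 2) / 2) •
      W ((Z 0 + Z 3) / (Z 1 - I * Z 2)) ((Z 0 - Z 3) / (Z 1 - I * Z 2)) := by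
  have hnull : (Z 1 - I * Z 2) * (Z 1 + I * Z 2) = (Z 0 + Z 3) * (Z 0 - Z 3) := by
    unfold B at hZ
    linear_combination hZ - Z 2 * Z 2 * I_sq
  -- `field_simp` puts `I * Z 2` into the form `Z 2 * I`
  have hu' : Z 1 - Z 2 * I ≠ 0 := by rwa [mul_comm]
  funext i
  fin_cases i <;>
    simp only [Fin.zero_eta, Fin.mk_one, Fin.reduceFinMk, Fin.isValue, W, Pi.smul_apply,
      Matrix.cons_val_zero, Matrix.cons_val_one, Matrix.cons_val, smul_eq_mul] <;>
    field_simp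
  · ring
  · linear_combination hnull
  · linear_combination -I * hnull + 2 * Z 2 * (Z 1 - I * Z 2) * I_sq
  · ring

theorem B_smul_W_conj (μ a b : ℂ) :
    B (μ • W a b) (fun i => conj ((μ • W a b) i)) =
      2 * normSq μ * normSq (1 - a * conj b) := by
  simp only [B, W, ← mul_conj, Pi.smul_apply, smul_eq_mul, map_mul, map_sub, map_add, map_one,
    conj_I, conj_conj, Matrix.cons_val]
  linear_combination -(μ * conj μ) * (1 - a * b) * (1 - conj a * conj b) * I_sq

theorem stmt1 (Z : Fin 4 → ℂ) (r : ℝ) (hr : 0 < r)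
    (h1 : B Z Z = 0)
    (h2 : B Z (fun i => starRingEnd ℂ (Z i)) = ((2 * r ^ 2 : ℝ) : ℂ))
    (h3 : Z 1 - Complex.I * Z 2 ≠ 0) :
    ((Z 0 + Z 3) / (Z 1 - Complex.I * Z 2)) *
      starRingEnd ℂ ((Z 0 - Z 3) / (Z 1 - Complex.I * Z 2)) ≠ 1 ∧
    Z = fun i => ((Z 1 - Complex.I * Z 2) / 2) *
      W ((Z 0 + Z 3) / (Z 1 - Complex.I * Z 2))
        ((Z 0 - Z 3) / (Z 1 - Complex.I * Z 2)) i := by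
  have hZ := eq_smul_W_of_B_self_eq_zero h1 h3
  refine ⟨fun hab => ?_, hZ⟩
  have h := B_smul_W_conj ((Z 1 - I * Z 2) / 2) ((Z 0 + Z 3) / (Z 1 - I * Z 2))
    ((Z 0 - Z 3) / (Z 1 - I * Z 2))
  rw [← hZ, h2, hab, sub_self, map_zero, ofReal_zero, mul_zero] at h
  exact (by positivity : 2 * r ^ 2 ≠ 0) (by exact_mod_cast h)
end

section
/- Let M ⊆ C be open and connected, let a, b : M → C be smooth with a(w)·conj(b(w)) ≠ 1 for all w, and consider the conformality relation ⟨f_w, v⟩ = 0 where f_w = μ·W(a,b) with W(a,b) = (a+b, 1+ab, i(1-ab), a-b) and μ never zero. Let v = (v₀,v₁,v₂,v₃) ∈ R^4 with ⟨v,v⟩ = ±1, and set V₀ = v₀+v₃, V₃ = -v₀+v₃, Z = v₁+iv₂. Then ⟨W(a(w),b(w)), v⟩ = 0 for all w ∈ M if and only if a(w) = (V₀·b(w) - Z)/(V₃ + conj(Z)·b(w)) for all w ∈ M (in particular V₃ + conj(Z)·b(w) ≠ 0). -/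
lemma aux_ptwise (A C : ℂ) (v : Fin 4 → ℝ)
    (hv : -(v 0 * v 0) + v 1 * v 1 + v 2 * v 2 + v 3 * v 3 = 1 ∨
          -(v 0 * v 0) + v 1 * v 1 + v 2 * v 2 + v 3 * v 3 = -1) :
    B (W A C) (fun i => ((v i : ℝ) : ℂ)) = 0 ↔
    ((-(v 0 : ℂ) + (v 3 : ℂ)) + starRingEnd ℂ ((v 1 : ℂ) + Complex.I * (v 2 : ℂ)) * C ≠ 0 ∧
     A = (((v 0 : ℂ) + (v 3 : ℂ)) * C - ((v 1 : ℂ) + Complex.I * (v 2 : ℂ))) /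
       ((-(v 0 : ℂ) + (v 3 : ℂ)) + starRingEnd ℂ ((v 1 : ℂ) + Complex.I * (v 2 : ℂ)) * C)) := by
  have hconj : starRingEnd ℂ ((v 1 : ℂ) + Complex.I * (v 2 : ℂ))
      = (v 1 : ℂ) - Complex.I * (v 2 : ℂ) := by
    simp [Complex.conj_ofReal]
    ring
  rw [hconj]
  set D : ℂ := (-(v 0 : ℂ) + (v 3 : ℂ)) + ((v 1 : ℂ) - Complex.I * (v 2 : ℂ)) * C with hD
  have hB : B (W A C) (fun i => ((v i : ℝ) : ℂ))
      = A * D - (((v 0 : ℂ) + (v 3 : ℂ)) * C - ((v 1 : ℂ) + Complex.I * (v 2 : ℂ))) := by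
    simp only [B, W, hD]
    simp only [Matrix.cons_val_zero, Matrix.cons_val_one, Matrix.head_cons,
      Matrix.cons_val_two, Matrix.tail_cons, Matrix.cons_val_three]
    ring
  rw [hB]
  constructor
  · intro h
    have hDne : D ≠ 0 := by
      intro h0
      have hN : ((v 0 : ℂ) + (v 3 : ℂ)) * C - ((v 1 : ℂ) + Complex.I * (v 2 : ℂ)) = 0 := by
        linear_combination A * h0 - h
      have hvC : (-( (v 0 : ℂ) * (v 0 : ℂ)) + (v 1:ℂ) * (v 1:ℂ) + (v 2:ℂ) * (v 2:ℂ)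
          + (v 3:ℂ) * (v 3:ℂ) = 1) ∨
          (-( (v 0 : ℂ) * (v 0 : ℂ)) + (v 1:ℂ) * (v 1:ℂ) + (v 2:ℂ) * (v 2:ℂ)
          + (v 3:ℂ) * (v 3:ℂ) = -1) := by
        rcases hv with h1 | h1
        · left; exact_mod_cast congrArg (Complex.ofReal) h1
        · right; exact_mod_cast congrArg (Complex.ofReal) h1
      have hE : -( (v 0 : ℂ) * (v 0 : ℂ)) + (v 1:ℂ) * (v 1:ℂ) + (v 2:ℂ) * (v 2:ℂ)
          + (v 3:ℂ) * (v 3:ℂ) = 0 := by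
        have h0' : (-(v 0 : ℂ) + (v 3 : ℂ)) + ((v 1 : ℂ) - Complex.I * (v 2 : ℂ)) * C = 0 := h0
        linear_combination ((v 0 : ℂ) + (v 3 : ℂ)) * h0'
          - ((v 1 : ℂ) - Complex.I * (v 2 : ℂ)) * hN
          + ((v 2 : ℂ) * (v 2 : ℂ)) * Complex.I_mul_I
      rcases hvC with h1 | h1
      · exact one_ne_zero (h1.symm.trans hE)
      · exact (by norm_num : (-1 : ℂ) ≠ 0) (h1.symm.trans hE)
    refine ⟨hDne, ?_⟩
    field_simp
    linear_combination h
  · rintro ⟨hDne, hA⟩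
    rw [hA]
    field_simp
    ring

theorem stmt5 (M : Set ℂ) (hM : IsOpen M) (hconn : IsConnected M)
    (a b : ℂ → ℂ) (ha : ContDiffOn ℝ (⊤ : ℕ∞) a M) (hb : ContDiffOn ℝ (⊤ : ℕ∞) b M)
    (hab : ∀ w ∈ M, a w * starRingEnd ℂ (b w) ≠ 1)
    (v : Fin 4 → ℝ)
    (hv : -(v 0 * v 0) + v 1 * v 1 + v 2 * v 2 + v 3 * v 3 = 1 ∨
          -(v 0 * v 0) + v 1 * v 1 + v 2 * v 2 + v 3 * v 3 = -1) :
    (∀ w ∈ M, B (W (a w) (b w)) (fun i => ((v i : ℝ) : ℂ)) = 0) ↔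
    (∀ w ∈ M,
      ((-(v 0 : ℂ) + (v 3 : ℂ)) + starRingEnd ℂ ((v 1 : ℂ) + Complex.I * (v 2 : ℂ)) * b w ≠ 0 ∧
       a w = (((v 0 : ℂ) + (v 3 : ℂ)) * b w - ((v 1 : ℂ) + Complex.I * (v 2 : ℂ))) /
         ((-(v 0 : ℂ) + (v 3 : ℂ)) + starRingEnd ℂ ((v 1 : ℂ) + Complex.I * (v 2 : ℂ)) * b w))) := by
  exact forall₂_congr fun w _ => aux_ptwise (a w) (b w) v hv
end

section
/- Let M ⊆ C be open and connected, λ : M → R smooth and positive, x : M → C smooth, and f(w) = λ(w)·L(x(w)) where L(x) = (1+|x|², x+conj(x), -i(x-conj(x)), -1+|x|²) ∈ L^4. Then ⟨f_w, f_w⟩ = 0 if and only if x_w · (conj(x))_w = 0 at each point, and (assuming ⟨f_w,f_w⟩=0) ⟨f_w, conj(f_w)⟩ = 2λ²(|x_w|² + |(conj(x))_w|²). In particular f is a conformal immersion into the light cone if and only if at each point exactly one of x_w, (conj(x))_w vanishes and the other is nonzero. -/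
/-- Wirtinger derivative `∂/∂w`. -/
noncomputable def wd (f : ℂ → ℂ) (w : ℂ) : ℂ :=
  (fderiv ℝ f w 1 - Complex.I * fderiv ℝ f w Complex.I) / 2

/-- Wirtinger derivative `∂/∂w̄`. -/
noncomputable def wdbar (f : ℂ → ℂ) (w : ℂ) : ℂ :=
  (fderiv ℝ f w 1 + Complex.I * fderiv ℝ f w Complex.I) / 2

/-- `L(x) = (1+|x|², x+conj x, -i(x-conj x), -1+|x|²)`. -/
noncomputable def Lc (x : ℂ) : Fin 4 → ℂ :=
  ![1 + x * starRingEnd ℂ x, x + starRingEnd ℂ x,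
    -Complex.I * (x - starRingEnd ℂ x), -1 + x * starRingEnd ℂ x]

lemma wd_const (c w : ℂ) : wd (fun _ => c) w = 0 := by simp [wd]

lemma wd_add {f g : ℂ → ℂ} {w : ℂ} (hf : DifferentiableAt ℝ f w)
    (hg : DifferentiableAt ℝ g w) :
    wd (fun z => f z + g z) w = wd f w + wd g w := by
  simp only [wd, fderiv_fun_add hf hg, ContinuousLinearMap.add_apply]; ring

lemma wd_sub {f g : ℂ → ℂ} {w : ℂ} (hf : DifferentiableAt ℝ f w)
    (hg : DifferentiableAt ℝ g w) :
    wd (fun z => f z - g z) w = wd f w - wd g w := by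
  simp only [wd, fderiv_fun_sub hf hg, ContinuousLinearMap.sub_apply]; ring

lemma wd_mul {f g : ℂ → ℂ} {w : ℂ} (hf : DifferentiableAt ℝ f w)
    (hg : DifferentiableAt ℝ g w) :
    wd (fun z => f z * g z) w = wd f w * g w + f w * wd g w := by
  simp only [wd, fderiv_fun_mul hf hg, ContinuousLinearMap.add_apply,
    ContinuousLinearMap.smul_apply, smul_eq_mul]; ring

lemma wd_const_mul {f : ℂ → ℂ} {w : ℂ} (c : ℂ) (hf : DifferentiableAt ℝ f w) :
    wd (fun z => c * f z) w = c * wd f w := by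
  rw [wd_mul (differentiableAt_const c) hf, wd_const]; ring

lemma wd_const_add {f : ℂ → ℂ} {w : ℂ} (c : ℂ) (hf : DifferentiableAt ℝ f w) :
    wd (fun z => c + f z) w = wd f w := by
  rw [wd_add (differentiableAt_const c) hf, wd_const]; ring


theorem stmt9 (M : Set ℂ) (hM : IsOpen M) (hconn : IsConnected M)
    (lam : ℂ → ℝ) (hlam : ContDiffOn ℝ (⊤ : ℕ∞) (fun z => ((lam z : ℝ) : ℂ)) M)
    (hpos : ∀ w ∈ M, 0 < lam w)
    (x : ℂ → ℂ) (hx : ContDiffOn ℝ (⊤ : ℕ∞) x M)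
    (f : ℂ → Fin 4 → ℂ) (hf : ∀ z i, f z i = ((lam z : ℝ) : ℂ) * Lc (x z) i)
    (fw : ℂ → Fin 4 → ℂ) (hfw : ∀ w i, fw w i = wd (fun z => f z i) w) :
    ∀ w ∈ M,
      (B (fw w) (fw w) = 0 ↔
        wd x w * wd (fun z => starRingEnd ℂ (x z)) w = 0) ∧
      (B (fw w) (fw w) = 0 →
        B (fw w) (fun i => starRingEnd ℂ (fw w i)) =
          2 * ((lam w : ℝ) : ℂ) ^ 2 *
            (((Complex.normSq (wd x w) : ℝ) : ℂ) +
             ((Complex.normSq (wd (fun z => starRingEnd ℂ (x z)) w) : ℝ) : ℂ))) ∧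
      ((B (fw w) (fw w) = 0 ∧ 0 < (B (fw w) (fun i => starRingEnd ℂ (fw w i))).re) ↔
        ((wd x w = 0 ∧ wd (fun z => starRingEnd ℂ (x z)) w ≠ 0) ∨
         (wd (fun z => starRingEnd ℂ (x z)) w = 0 ∧ wd x w ≠ 0))) := by
  intro w hw
  have hwmem : M ∈ nhds w := hM.mem_nhds hw
  set xb : ℂ → ℂ := fun z => starRingEnd ℂ (x z) with hxbdef
  set l : ℂ → ℂ := fun z => ((lam z : ℝ) : ℂ) with hldef
  have hxd : DifferentiableAt ℝ x w := (hx.contDiffAt hwmem).differentiableAt (by simp)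
  have hxbd : DifferentiableAt ℝ xb w := hxd.star
  have hld : DifferentiableAt ℝ l w := (hlam.contDiffAt hwmem).differentiableAt (by simp)
  set a := wd x w with ha_def
  set b := wd xb w with hb_def
  set μ := wd l w with hmu_def
  have hmul : DifferentiableAt ℝ (fun z => x z * xb z) w := hxd.mul hxbd
  have hlamw := hpos w hw
  have hΛne : ((lam w : ℝ) : ℂ) ≠ 0 := Complex.ofReal_ne_zero.mpr hlamw.ne'
  -- component formulas
  have e0 : fw w 0 = μ * (1 + x w * xb w) + ((lam w : ℝ) : ℂ) * (a * xb w + x w * b) := by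
    rw [hfw]
    have h1 : (fun z => f z 0) = fun z => l z * (1 + x z * xb z) := by
      funext z; rw [hf z 0]; rfl
    rw [h1, wd_mul hld ((differentiableAt_const 1).fun_add hmul),
      wd_const_add 1 hmul, wd_mul hxd hxbd]
  have e1 : fw w 1 = μ * (x w + xb w) + ((lam w : ℝ) : ℂ) * (a + b) := by
    rw [hfw]
    have h1 : (fun z => f z 1) = fun z => l z * (x z + xb z) := by
      funext z; rw [hf z 1]; rfl
    rw [h1, wd_mul hld (hxd.fun_add hxbd), wd_add hxd hxbd]
  have e2 : fw w 2 = μ * (-Complex.I * (x w - xb w)) +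
      ((lam w : ℝ) : ℂ) * (-Complex.I * (a - b)) := by
    rw [hfw]
    have h1 : (fun z => f z 2) = fun z => l z * (-Complex.I * (x z - xb z)) := by
      funext z; rw [hf z 2]; rfl
    rw [h1, wd_mul hld ((hxd.fun_sub hxbd).const_mul _),
      wd_const_mul _ (hxd.fun_sub hxbd), wd_sub hxd hxbd]
  have e3 : fw w 3 = μ * (-1 + x w * xb w) + ((lam w : ℝ) : ℂ) * (a * xb w + x w * b) := by
    rw [hfw]
    have h1 : (fun z => f z 3) = fun z => l z * (-1 + x z * xb z) := by
      funext z; rw [hf z 3]; rfl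
    rw [h1, wd_mul hld ((differentiableAt_const (-1)).fun_add hmul),
      wd_const_add (-1) hmul, wd_mul hxd hxbd]
  have hB1 : B (fw w) (fw w) = 4 * ((lam w : ℝ) : ℂ) ^ 2 * (a * b) := by
    simp only [B, e0, e1, e2, e3]; ring_nf
    simp only [Complex.I_sq]; ring
  have hB2 : B (fw w) (fun i => starRingEnd ℂ (fw w i)) =
      2 * ((lam w : ℝ) : ℂ) ^ 2 *
        (a * starRingEnd ℂ a + b * starRingEnd ℂ b) := by
    simp only [B, e0, e1, e2, e3, hxbdef, map_add, map_mul, map_sub, map_neg, map_one,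
      Complex.conj_conj, Complex.conj_I, Complex.conj_ofReal]
    ring_nf
    simp only [Complex.I_sq]; ring
  have hiff1 : B (fw w) (fw w) = 0 ↔ a * b = 0 := by
    rw [hB1]
    constructor
    · intro h
      exact (mul_eq_zero.mp h).resolve_left
        (mul_ne_zero (by norm_num) (pow_ne_zero _ hΛne))
    · intro h; rw [h, mul_zero]
  have hB2' : B (fw w) (fun i => starRingEnd ℂ (fw w i)) =
      2 * ((lam w : ℝ) : ℂ) ^ 2 *
        (((Complex.normSq a : ℝ) : ℂ) + ((Complex.normSq b : ℝ) : ℂ)) := by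
    rw [hB2, Complex.mul_conj, Complex.mul_conj]
  have hre : (B (fw w) (fun i => starRingEnd ℂ (fw w i))).re =
      2 * (lam w) ^ 2 * (Complex.normSq a + Complex.normSq b) := by
    rw [hB2']
    have : (2 * ((lam w : ℝ) : ℂ) ^ 2 *
        (((Complex.normSq a : ℝ) : ℂ) + ((Complex.normSq b : ℝ) : ℂ))) =
        (((2 * (lam w) ^ 2 * (Complex.normSq a + Complex.normSq b) : ℝ)) : ℂ) := by
      push_cast; ring
    rw [this, Complex.ofReal_re]
  refine ⟨hiff1, fun _ => hB2', ?_⟩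
  constructor
  · rintro ⟨hB, hp⟩
    have hab : a * b = 0 := hiff1.mp hB
    rw [hre] at hp
    rcases mul_eq_zero.mp hab with h | h
    · left
      refine ⟨h, fun hb => ?_⟩
      rw [h, hb] at hp
      simp at hp
    · right
      refine ⟨h, fun ha => ?_⟩
      rw [h, ha] at hp
      simp at hp
  · rintro (⟨h1, h2⟩ | ⟨h1, h2⟩)
    · refine ⟨hiff1.mpr (by rw [h1, zero_mul]), ?_⟩
      rw [hre, h1]
      have : 0 < Complex.normSq b := Complex.normSq_pos.mpr h2
      have h2l : (0:ℝ) < 2 * (lam w) ^ 2 := by positivity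
      nlinarith [Complex.normSq_nonneg (0:ℂ)]
    · refine ⟨hiff1.mpr (by rw [h1, mul_zero]), ?_⟩
      rw [hre, h1]
      have : 0 < Complex.normSq a := Complex.normSq_pos.mpr h2
      have h2l : (0:ℝ) < 2 * (lam w) ^ 2 := by positivity
      nlinarith [Complex.normSq_nonneg (0:ℂ)]
end

section
/- Let M ⊆ C be open and connected, and let μ₀, μ₁ : M → C be nowhere-vanishing smooth functions both satisfying the equation ∂(Log μ)/∂w̄ = (conj(b)·a_w̄)/(1 - a·conj(b)) + (conj(a)·b_w̄)/(1 - b·conj(a)) for given smooth a, b : M → C with a·conj(b) ≠ 1 everywhere. Then h := μ₁/μ₀ is holomorphic on M. If moreover a is not holomorphic (a_w̄ ≢ 0), the compatibility condition that (μ₀·a_w̄)/(1 - a·conj(b)) and (μ₁·a_w̄)/(1 - a·conj(b)) are both real-valued forces h to be a nonzero real constant. -/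
/-- A real-linear map on `ℂ` satisfying the Cauchy–Riemann relation is multiplication. -/
lemma clm_eq_mul (L : ℂ →L[ℝ] ℂ) (hCR : L Complex.I = Complex.I * L 1) (z : ℂ) :
    L z = z * L 1 := by
  have hz : z = z.re • (1 : ℂ) + z.im • Complex.I := by
    simp [Complex.real_smul, Complex.re_add_im]
  calc L z = L (z.re • (1 : ℂ) + z.im • Complex.I) := by rw [← hz]
    _ = z.re • L 1 + z.im • L Complex.I := by rw [map_add, map_smul, map_smul]
    _ = z * L 1 := by
        rw [hCR, Complex.real_smul, Complex.real_smul]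
        linear_combination (L 1) * (Complex.re_add_im z)

/-- Cauchy–Riemann implies complex differentiability. -/
lemma holo_of_CR {f : ℂ → ℂ} {L : ℂ →L[ℝ] ℂ} {w : ℂ} (h : HasFDerivAt f L w)
    (hCR : L Complex.I = Complex.I * L 1) : DifferentiableAt ℂ f w := by
  refine ⟨ContinuousLinearMap.smulRight (1 : ℂ →L[ℂ] ℂ) (L 1),
    hasFDerivAt_of_restrictScalars (𝕜 := ℝ) h ?_⟩
  ext z
  simp [clm_eq_mul L hCR z, smul_eq_mul, mul_comm]

theorem stmt11 (M : Set ℂ) (hM : IsOpen M) (hconn : IsConnected M)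
    (a b μ₀ μ₁ : ℂ → ℂ)
    (ha : ContDiffOn ℝ (⊤ : ℕ∞) a M) (hb : ContDiffOn ℝ (⊤ : ℕ∞) b M)
    (hμ₀s : ContDiffOn ℝ (⊤ : ℕ∞) μ₀ M) (hμ₁s : ContDiffOn ℝ (⊤ : ℕ∞) μ₁ M)
    (hμ₀ : ∀ w ∈ M, μ₀ w ≠ 0) (hμ₁ : ∀ w ∈ M, μ₁ w ≠ 0)
    (hab : ∀ w ∈ M, a w * starRingEnd ℂ (b w) ≠ 1)
    (hba : ∀ w ∈ M, b w * starRingEnd ℂ (a w) ≠ 1)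
    (heq0 : ∀ w ∈ M, wdbar μ₀ w = μ₀ w *
      (starRingEnd ℂ (b w) * wdbar a w / (1 - a w * starRingEnd ℂ (b w)) +
       starRingEnd ℂ (a w) * wdbar b w / (1 - b w * starRingEnd ℂ (a w))))
    (heq1 : ∀ w ∈ M, wdbar μ₁ w = μ₁ w *
      (starRingEnd ℂ (b w) * wdbar a w / (1 - a w * starRingEnd ℂ (b w)) +
       starRingEnd ℂ (a w) * wdbar b w / (1 - b w * starRingEnd ℂ (a w)))) :
    DifferentiableOn ℂ (fun z => μ₁ z / μ₀ z) M ∧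
    ((∃ w ∈ M, wdbar a w ≠ 0) →
      (∀ w ∈ M, (μ₀ w * wdbar a w / (1 - a w * starRingEnd ℂ (b w))).im = 0) →
      (∀ w ∈ M, (μ₁ w * wdbar a w / (1 - a w * starRingEnd ℂ (b w))).im = 0) →
      ∃ c : ℝ, c ≠ 0 ∧ ∀ w ∈ M, μ₁ w = (c : ℂ) * μ₀ w) := by
  set h : ℂ → ℂ := fun z => μ₁ z / μ₀ z with hh
  -- Part 1: h is complex differentiable at every point of M
  have key : ∀ w ∈ M, DifferentiableAt ℂ h w := by
    intro w hw
    have hd0 : DifferentiableAt ℝ μ₀ w :=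
      (hμ₀s.contDiffAt (hM.mem_nhds hw)).differentiableAt (by simp)
    have hd1 : DifferentiableAt ℝ μ₁ w :=
      (hμ₁s.contDiffAt (hM.mem_nhds hw)).differentiableAt (by simp)
    have hm0 : μ₀ w ≠ 0 := hμ₀ w hw
    set u : ℂˣ := Units.mk0 (μ₀ w) hm0 with hu
    have hinv : HasFDerivAt (fun z => Ring.inverse (μ₀ z))
        ((-(ContinuousLinearMap.mulLeftRight ℝ ℂ ↑u⁻¹ ↑u⁻¹)).comp (fderiv ℝ μ₀ w)) w :=
      (hasFDerivAt_ringInverse u).comp w hd0.hasFDerivAt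
    have hfun : h = fun z => μ₁ z * Ring.inverse (μ₀ z) := by
      funext z; simp [hh, div_eq_mul_inv, Ring.inverse_eq_inv']
    have hdiv : HasFDerivAt h
        (μ₁ w • ((-(ContinuousLinearMap.mulLeftRight ℝ ℂ ↑u⁻¹ ↑u⁻¹)).comp (fderiv ℝ μ₀ w)) +
          Ring.inverse (μ₀ w) • fderiv ℝ μ₁ w) w := by
      rw [hfun]
      exact hd1.hasFDerivAt.mul hinv
    refine holo_of_CR hdiv ?_
    set E : ℂ := starRingEnd ℂ (b w) * wdbar a w / (1 - a w * starRingEnd ℂ (b w)) +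
       starRingEnd ℂ (a w) * wdbar b w / (1 - b w * starRingEnd ℂ (a w)) with hE
    set p := fderiv ℝ μ₁ w 1 with hp
    set q := fderiv ℝ μ₁ w Complex.I with hq'
    set r := fderiv ℝ μ₀ w 1 with hr
    set s := fderiv ℝ μ₀ w Complex.I with hs'
    have h0 : (r + Complex.I * s) / 2 = μ₀ w * E := heq0 w hw
    have h1 : (p + Complex.I * q) / 2 = μ₁ w * E := heq1 w hw
    have hq : q = Complex.I * p - 2 * Complex.I * (μ₁ w * E) := by
      linear_combination (-2 * Complex.I) * h1 + q * Complex.I_sq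
    have hs : s = Complex.I * r - 2 * Complex.I * (μ₀ w * E) := by
      linear_combination (-2 * Complex.I) * h0 + s * Complex.I_sq
    simp only [ContinuousLinearMap.add_apply, ContinuousLinearMap.smul_apply,
      ContinuousLinearMap.comp_apply, ContinuousLinearMap.neg_apply,
      ContinuousLinearMap.mulLeftRight_apply, smul_eq_mul, ← hp, ← hq', ← hr, ← hs',
      Ring.inverse_eq_inv']
    have huval : ((u⁻¹ : ℂˣ) : ℂ) = (μ₀ w)⁻¹ := by
      rw [Units.val_inv_eq_inv_val, hu]; rfl
    rw [huval, hq, hs]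
    field_simp
    ring
  have hdiff : DifferentiableOn ℂ h M := fun w hw => (key w hw).differentiableWithinAt
  refine ⟨hdiff, ?_⟩
  rintro ⟨w₀, hw₀, hwa0⟩ hre0 hre1
  -- wdbar a is continuous on M
  have hfc : ContinuousOn (fun w => fderiv ℝ a w) M :=
    ((ha.fderiv_of_isOpen hM (m := 0) (by simp)).continuousOn)
  have hwc : ContinuousOn (fun w => wdbar a w) M := by
    unfold wdbar
    refine ContinuousOn.div_const ?_ _
    refine ContinuousOn.add ?_ (continuousOn_const.mul ?_)
    · exact (ContinuousLinearMap.apply ℝ ℂ (1 : ℂ)).continuous.comp_continuousOn hfc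
    · exact (ContinuousLinearMap.apply ℝ ℂ (Complex.I)).continuous.comp_continuousOn hfc
  set U : Set ℂ := M ∩ (fun w => wdbar a w) ⁻¹' {0}ᶜ with hU
  have hUopen : IsOpen U := hwc.isOpen_inter_preimage hM isOpen_compl_singleton
  have hw₀U : w₀ ∈ U := ⟨hw₀, by simpa using hwa0⟩
  -- h is real on U
  have hreal : ∀ w ∈ U, (h w).im = 0 := by
    rintro w ⟨hw, hwne⟩
    have hwne : wdbar a w ≠ 0 := by simpa using hwne
    have hden : (1 : ℂ) - a w * starRingEnd ℂ (b w) ≠ 0 := sub_ne_zero.2 (Ne.symm (hab w hw))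
    set t : ℂ := wdbar a w / (1 - a w * starRingEnd ℂ (b w)) with ht
    have htne : t ≠ 0 := div_ne_zero hwne hden
    have h0im : (μ₀ w * t).im = 0 := by
      have := hre0 w hw; rwa [mul_div_assoc] at this
    have h1im : (μ₁ w * t).im = 0 := by
      have := hre1 w hw; rwa [mul_div_assoc] at this
    have hwt : h w = (μ₁ w * t) / (μ₀ w * t) := by
      simp only [hh]
      rw [mul_div_mul_right _ _ htne]
    rw [hwt, Complex.div_im, h0im, h1im]
    simp
  -- deriv h vanishes on U
  have hderiv0 : ∀ w ∈ U, deriv h w = 0 := by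
    intro w hw
    have hwM : w ∈ M := hw.1
    have hdc : DifferentiableAt ℂ h w := key w hwM
    have hdr : DifferentiableAt ℝ h w := hdc.restrictScalars ℝ
    -- the imaginary part of h is locally 0
    have hev : (fun z => (h z).im) =ᶠ[nhds w] fun _ => (0 : ℝ) := by
      filter_upwards [hUopen.mem_nhds hw] with z hz using hreal z hz
    have him : fderiv ℝ (fun z => (h z).im) w = 0 := by
      rw [hev.fderiv_eq]; exact fderiv_const_apply 0
    have hcomp : fderiv ℝ (fun z => (h z).im) w =
        Complex.imCLM.comp (fderiv ℝ h w) :=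
      (Complex.imCLM.hasFDerivAt.comp w hdr.hasFDerivAt).fderiv
    have himv : ∀ v : ℂ, (fderiv ℝ h w v).im = 0 := by
      intro v
      have := congrArg (fun (L : ℂ →L[ℝ] ℝ) => L v) (hcomp.symm.trans him)
      simpa using this
    have hres : fderiv ℝ h w = (fderiv ℂ h w).restrictScalars ℝ :=
      hdc.fderiv_restrictScalars ℝ
    have h1 : fderiv ℝ h w 1 = deriv h w := by
      rw [hres]
      show fderiv ℂ h w 1 = deriv h w
      exact fderiv_apply_one_eq_deriv
    have hI : fderiv ℝ h w Complex.I = Complex.I * deriv h w := by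
      rw [hres]
      show fderiv ℂ h w Complex.I = Complex.I * deriv h w
      have h2 : fderiv ℂ h w Complex.I = Complex.I • fderiv ℂ h w 1 := by
        rw [← map_smul]; congr 1; simp
      rw [h2, fderiv_apply_one_eq_deriv, smul_eq_mul]
    have e1 : (deriv h w).im = 0 := by rw [← h1]; exact himv 1
    have e2 : (deriv h w).re = 0 := by
      have := himv Complex.I
      rw [hI] at this
      simpa [Complex.mul_im] using this
    exact Complex.ext e2 e1
  -- h is locally constant near w₀
  obtain ⟨ε, hε, hball⟩ := Metric.isOpen_iff.1 hUopen w₀ hw₀U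
  have hconst : ∀ z ∈ Metric.ball w₀ ε, h z = h w₀ := by
    intro z hz
    refine (convex_ball w₀ ε).is_const_of_fderivWithin_eq_zero (𝕜 := ℂ)
      (fun y hy => (key y (hball hy).1).differentiableWithinAt) ?_ hz (Metric.mem_ball_self hε)
    intro x hx
    rw [fderivWithin_of_isOpen Metric.isOpen_ball hx]
    have hd : HasDerivAt h 0 x := hderiv0 x (hball hx) ▸ (key x (hball hx).1).hasDerivAt
    rw [hd.hasFDerivAt.fderiv]
    ext
    simp
  -- identity theorem
  have hEq : Set.EqOn h (fun _ => h w₀) M := by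
    refine AnalyticOnNhd.eqOn_of_preconnected_of_eventuallyEq
      (hdiff.analyticOnNhd hM) analyticOnNhd_const hconn.isPreconnected hw₀ ?_
    filter_upwards [Metric.ball_mem_nhds w₀ hε] with z hz using hconst z hz
  -- extract the real constant
  have him0 : (h w₀).im = 0 := hreal w₀ hw₀U
  have hne : h w₀ ≠ 0 := by
    simp only [hh]
    exact div_ne_zero (hμ₁ w₀ hw₀) (hμ₀ w₀ hw₀)
  refine ⟨(h w₀).re, ?_, ?_⟩
  · intro hc
    exact hne (Complex.ext hc him0)
  · intro w hw
    have hcw : h w = ((h w₀).re : ℂ) := by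
      rw [hEq hw]
      exact (Complex.ext (by simp) (by simp [him0])).symm
    simp only [hh] at hcw
    rw [div_eq_iff (hμ₀ w hw)] at hcw
    exact hcw
end

section
/- Let v ∈ R^4 be a unit vector, set V₀ = v₀+v₃, V₃ = -v₀+v₃, Z = v₁+iv₂, let M ⊆ C be open, b : M → C anti-holomorphic with V₃ + conj(Z)·b(w) ≠ 0 and V₃ + Z·conj(b) + conj(Z)·b - V₀·b·conj(b) ≠ 0 on M, and define a(w) = (V₀·b(w) - Z)/(V₃ + conj(Z)·b(w)). Then for every k > 0, the real-valued function λ(w) = k·(V₃² + V₃(Z·conj(b) + conj(Z)·b) + |Z|²·|b|²)/(V₃ + Z·conj(b) + conj(Z)·b - V₀·b·conj(b)) satisfies ∂(ln λ)/∂w = (b·(conj(a))_w)/(1 - b·conj(a)). -/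
lemma wd_of_hasFDerivAt {f : ℂ → ℂ} {L : ℂ →L[ℝ] ℂ} {w : ℂ} (h : HasFDerivAt f L w) :
    wd f w = (L 1 - Complex.I * L Complex.I) / 2 := by
  rw [wd, h.fderiv]

lemma comp_holo {g d : ℂ → ℂ} {g' : ℂ} {d' : ℂ →L[ℝ] ℂ} {x : ℂ}
    (hg : HasDerivAt g g' (d x)) (hd : HasFDerivAt d d' x) :
    HasFDerivAt (fun y => g (d y)) (g' • d') x := by
  have h := (hg.hasFDerivAt.restrictScalars ℝ).comp x hd
  refine h.congr_fderiv ?_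
  ext z
  simp [mul_comm]

lemma clm_eval {B : ℂ →L[ℝ] ℂ} {q : ℂ} (h1 : B 1 = q) (hI : B Complex.I = -Complex.I * q)
    (z : ℂ) : B z = starRingEnd ℂ z * q := by
  have hz : z = z.re • (1:ℂ) + z.im • Complex.I := by
    simp [Complex.real_smul, Complex.re_add_im]
  have hcz : starRingEnd ℂ z = (z.re : ℂ) - (z.im : ℂ) * Complex.I := by
    apply Complex.ext <;> simp
  calc B z = B (z.re • (1:ℂ) + z.im • Complex.I) := by rw [← hz]
    _ = z.re • B 1 + z.im • B Complex.I := by rw [map_add, map_smul, map_smul]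
    _ = starRingEnd ℂ z * q := by
        rw [h1, hI, hcz, Complex.real_smul, Complex.real_smul]
        ring

set_option maxHeartbeats 2000000 in
theorem stmt14 (M : Set ℂ) (hM : IsOpen M)
    (v : Fin 4 → ℝ)
    (hv : -(v 0 * v 0) + v 1 * v 1 + v 2 * v 2 + v 3 * v 3 = 1 ∨
          -(v 0 * v 0) + v 1 * v 1 + v 2 * v 2 + v 3 * v 3 = -1)
    (V0 V3 Z : ℂ)
    (hV0 : V0 = (v 0 : ℂ) + (v 3 : ℂ))
    (hV3 : V3 = -(v 0 : ℂ) + (v 3 : ℂ))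
    (hZ : Z = (v 1 : ℂ) + Complex.I * (v 2 : ℂ))
    (b : ℂ → ℂ) (hb : ContDiffOn ℝ (⊤ : ℕ∞) b M)
    (hbw : ∀ w ∈ M, wd b w = 0)
    (h1 : ∀ w ∈ M, V3 + starRingEnd ℂ Z * b w ≠ 0)
    (h2 : ∀ w ∈ M, V3 + Z * starRingEnd ℂ (b w) + starRingEnd ℂ Z * b w -
      V0 * (b w * starRingEnd ℂ (b w)) ≠ 0)
    (a : ℂ → ℂ)
    (ha : ∀ w, a w = (V0 * b w - Z) / (V3 + starRingEnd ℂ Z * b w))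
    (k : ℝ) (hk : 0 < k)
    (lam : ℂ → ℂ)
    (hlam : ∀ w, lam w = (k : ℂ) *
      (V3 ^ 2 + V3 * (Z * starRingEnd ℂ (b w) + starRingEnd ℂ Z * b w) +
        Z * starRingEnd ℂ Z * (b w * starRingEnd ℂ (b w))) /
      (V3 + Z * starRingEnd ℂ (b w) + starRingEnd ℂ Z * b w -
        V0 * (b w * starRingEnd ℂ (b w)))) :
    ∀ w ∈ M,
      (lam w).im = 0 ∧
      wd lam w = lam w *
        (b w * wd (fun z => starRingEnd ℂ (a z)) w /
          (1 - b w * starRingEnd ℂ (a w))) := by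
  have hV0c : (starRingEnd ℂ) V0 = V0 := by rw [hV0]; simp
  have hV3c : (starRingEnd ℂ) V3 = V3 := by rw [hV3]; simp
  intro w hw
  set c : ℂ → ℂ := fun z => starRingEnd ℂ (b z) with hc_def
  -- realness of lam
  have hreal : (lam w).im = 0 := by
    have : starRingEnd ℂ (lam w) = lam w := by
      rw [hlam w]
      simp only [map_div₀, map_mul, map_add, map_sub, map_pow, Complex.conj_conj,
        hV0c, hV3c, Complex.conj_ofReal]
      congr 1 <;> ring
    exact Complex.conj_eq_iff_im.mp this
  refine ⟨hreal, ?_⟩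
  -- derivative of b
  have hbd : DifferentiableAt ℝ b w := (hb.contDiffAt (hM.mem_nhds hw)).differentiableAt (by simp)
  have hb' : HasFDerivAt b (fderiv ℝ b w) w := hbd.hasFDerivAt
  set B := fderiv ℝ b w with hB
  set p : ℂ := starRingEnd ℂ (B 1) with hp
  have hBI : B Complex.I = -Complex.I * B 1 := by
    have hwdb := hbw w hw
    rw [wd] at hwdb
    have h0 : B 1 - Complex.I * B Complex.I = 0 := by
      field_simp at hwdb; rw [mul_zero] at hwdb; exact hwdb
    linear_combination Complex.I * h0 + B Complex.I * Complex.I_sq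
  have hBz : ∀ z, B z = starRingEnd ℂ z * starRingEnd ℂ p := by
    intro z
    rw [clm_eval rfl hBI z, hp, Complex.conj_conj]
  -- derivative of c
  obtain ⟨LC, hcFD, hLCz⟩ : ∃ L : ℂ →L[ℝ] ℂ, HasFDerivAt c L w ∧ ∀ z, L z = z * p := by
    refine ⟨_, hb'.star, fun z => ?_⟩
    simp [hBz z, Complex.star_def]
  -- notation
  have hA2 : V3 + Z * c w ≠ 0 := by
    intro h
    apply h1 w hw
    have := congrArg (starRingEnd ℂ) h
    rw [map_add, map_mul, hV3c, map_zero, hc_def, Complex.conj_conj] at this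
    exact this
  have hE : V3 + Z * c w + starRingEnd ℂ Z * b w - V0 * (b w * c w) ≠ 0 := h2 w hw
  -- conj ∘ a as a holomorphic function of c
  have hca : (fun z => starRingEnd ℂ (a z)) = fun z => (V0 * c z - starRingEnd ℂ Z) / (V3 + Z * c z) := by
    funext z
    rw [ha z, map_div₀, map_sub, map_mul, map_add, map_mul, hV0c, hV3c, Complex.conj_conj]
  have hwda : wd (fun z => starRingEnd ℂ (a z)) w =
      (V0 * V3 + Z * starRingEnd ℂ Z) * p / (V3 + Z * c w) ^ 2 := by
    rw [hca]
    have hg1 : HasDerivAt (fun z => V0 * z - starRingEnd ℂ Z) (V0 * 1) (c w) :=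
      ((hasDerivAt_id (c w)).const_mul V0).sub_const _
    have hg2 : HasDerivAt (fun z => V3 + Z * z) (Z * 1) (c w) :=
      ((hasDerivAt_id (c w)).const_mul Z).const_add V3
    have hg := hg1.div hg2 hA2
    have hFD := comp_holo hg hcFD
    rw [wd_of_hasFDerivAt (f := fun z => (V0 * c z - starRingEnd ℂ Z) / (V3 + Z * c z)) hFD]
    simp only [ContinuousLinearMap.smul_apply, hLCz, smul_eq_mul, mul_one]
    field_simp
    ring_nf
    simp only [Complex.I_sq]
    ring_nf
  -- derivative of lam
  have hlam' : lam = fun z => ((k : ℂ) * ((V3 + Z * c z) * (V3 + starRingEnd ℂ Z * b z))) *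
      (V3 + Z * c z + starRingEnd ℂ Z * b z - V0 * (b z * c z))⁻¹ := by
    funext z
    rw [hlam z, div_eq_mul_inv]
    congr 2
    · ring
  have hNum := (((hcFD.const_mul Z).const_add V3).mul ((hb'.const_mul (starRingEnd ℂ Z)).const_add V3)).const_mul (k : ℂ)
  have hDen := (((hcFD.const_mul Z).const_add V3).add (hb'.const_mul (starRingEnd ℂ Z))).sub ((hb'.mul hcFD).const_mul V0)
  have hInv := comp_holo (d := fun z => V3 + Z * c z + starRingEnd ℂ Z * b z - V0 * (b z * c z)) (hasDerivAt_inv hE) hDen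
  have hlamFD := hNum.mul hInv
  change HasFDerivAt (fun z => ((k : ℂ) * ((V3 + Z * c z) * (V3 + starRingEnd ℂ Z * b z))) *
      (V3 + Z * c z + starRingEnd ℂ Z * b z - V0 * (b z * c z))⁻¹) _ w at hlamFD
  rw [← hlam'] at hlamFD
  have hwdlam : wd lam w = (k : ℂ) * ((V3 + starRingEnd ℂ Z * b w) *
      ((V0 * V3 + Z * starRingEnd ℂ Z) * (b w * p))) /
      (V3 + Z * c w + starRingEnd ℂ Z * b w - V0 * (b w * c w)) ^ 2 := by
    rw [wd_of_hasFDerivAt hlamFD]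
    simp only [ContinuousLinearMap.add_apply, ContinuousLinearMap.sub_apply,
      ContinuousLinearMap.smul_apply, hLCz, hBz, smul_eq_mul, map_one, Complex.conj_I, mul_one, Pi.mul_apply]
    field_simp
    ring_nf
    simp only [Complex.I_sq]
    ring
  have hconjaw : starRingEnd ℂ (a w) = (V0 * c w - starRingEnd ℂ Z) / (V3 + Z * c w) :=
    congrFun hca w
  have h3 : 1 - b w * ((V0 * c w - starRingEnd ℂ Z) / (V3 + Z * c w)) =
      (V3 + Z * c w + starRingEnd ℂ Z * b w - V0 * (b w * c w)) / (V3 + Z * c w) := by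
    rw [eq_div_iff hA2, sub_mul, mul_assoc, div_mul_cancel₀ _ hA2]
    ring
  have hlamw : lam w = (k : ℂ) * ((V3 + Z * c w) * (V3 + starRingEnd ℂ Z * b w)) /
      (V3 + Z * c w + starRingEnd ℂ Z * b w - V0 * (b w * c w)) := by
    rw [hlam w]
    congr 1
    ring
  rw [hwdlam, hwda, hconjaw, h3, hlamw]
  field_simp
end

section
/- Let M ⊆ C be open and connected, P, Q, R : M → C holomorphic with P nowhere zero, and let x, y : M → C be two holomorphic solutions of the Riccati equation ψ_w = P·ψ² + Q·ψ + R with x(w) ≠ y(w) for all w. Let ψ : M → C be smooth with ψ(w) ≠ y(w) and ψ(w) ≠ x(w)... (ψ - y nowhere zero). Then ψ satisfies ψ_w = P·ψ² + Q·ψ + R if and only if the function G(w) = ((ψ(w)-x(w))/(ψ(w)-y(w)))·exp(-∫_{w₀}^{w} P(ξ)(x(ξ)-y(ξ)) dξ) has vanishing Wirtinger derivative G_w, i.e. G is anti-holomorphic on M. -/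
/-- Multiplication by `c` as a real-linear map `ℂ →L[ℝ] ℂ`. -/
noncomputable def cmulR (c : ℂ) : ℂ →L[ℝ] ℂ :=
  ((1 : ℂ →L[ℂ] ℂ).smulRight c).restrictScalars ℝ

@[simp] lemma cmulR_apply (c v : ℂ) : cmulR c v = v * c := by
  simp [cmulR, smul_eq_mul]

lemma hasFDerivAt_of_hasDerivAt {f : ℂ → ℂ} {c w : ℂ} (h : HasDerivAt f c w) :
    HasFDerivAt f (cmulR c) w := (h.hasFDerivAt).restrictScalars ℝ

set_option maxHeartbeats 1000000 in
open Complex in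
/-- Key pointwise computation of the Wirtinger derivative of the cross-ratio
type expression. -/
lemma key {ψ x y F : ℂ → ℂ} {w : ℂ} {L : ℂ →L[ℝ] ℂ} (hL : HasFDerivAt ψ L w)
    {x' y' F' : ℂ} (hx : HasDerivAt x x' w) (hy : HasDerivAt y y' w)
    (hF : HasDerivAt F F' w) (hvy : ψ w - y w ≠ 0) :
    wd (fun z => (ψ z - x z) / (ψ z - y z) * Complex.exp (-F z)) w =
      Complex.exp (-F w) * ((ψ w - y w)⁻¹ * (wd ψ w - x')
        - (ψ w - x w) * ((ψ w - y w) ^ 2)⁻¹ * (wd ψ w - y')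
        - (ψ w - x w) * (ψ w - y w)⁻¹ * F') := by
  have hu : HasFDerivAt (fun z => ψ z - x z) (L - cmulR x') w :=
    hL.sub (hasFDerivAt_of_hasDerivAt hx)
  have hv : HasFDerivAt (fun z => ψ z - y z) (L - cmulR y') w :=
    hL.sub (hasFDerivAt_of_hasDerivAt hy)
  have hinv : HasFDerivAt (fun t : ℂ => t⁻¹) (cmulR (-((ψ w - y w) ^ 2)⁻¹)) (ψ w - y w) :=
    (hasFDerivAt_inv hvy).restrictScalars ℝ
  have hvinv : HasFDerivAt (fun z => (ψ z - y z)⁻¹)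
      ((cmulR (-((ψ w - y w) ^ 2)⁻¹)).comp (L - cmulR y')) w := hinv.comp w hv
  have hq : HasFDerivAt (fun z => (ψ z - x z) * (ψ z - y z)⁻¹)
      ((ψ w - x w) • ((cmulR (-((ψ w - y w) ^ 2)⁻¹)).comp (L - cmulR y'))
        + (ψ w - y w)⁻¹ • (L - cmulR x')) w := hu.mul hvinv
  have hE : HasFDerivAt (fun z => Complex.exp (-F z))
      (cmulR (Complex.exp (-F w) * -F')) w :=
    hasFDerivAt_of_hasDerivAt (hF.neg.cexp)
  have hG := hq.mul hE
  have hfun : (fun z => (ψ z - x z) / (ψ z - y z) * Complex.exp (-F z)) =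
      fun z => (ψ z - x z) * (ψ z - y z)⁻¹ * Complex.exp (-F z) := by
    funext z; rw [div_eq_mul_inv]
  rw [hfun]
  unfold wd
  rw [HasFDerivAt.fderiv (f := fun z => (ψ z - x z) * (ψ z - y z)⁻¹ * Complex.exp (-F z)) hG, hL.fderiv]
  simp only [ContinuousLinearMap.add_apply, ContinuousLinearMap.smul_apply,
    ContinuousLinearMap.comp_apply, ContinuousLinearMap.sub_apply, cmulR_apply,
    smul_eq_mul]
  rw [show ((ψ w - y w) ^ 2)⁻¹ = (ψ w - y w)⁻¹ ^ 2 from (inv_pow _ _).symm]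
  ring_nf
  simp only [Complex.I_sq]
  ring_nf

/-- The primitive `F` of `P(x-y)` exists since `M` is simply
connected. A smooth `ψ` solves the Riccati equation iff
`(ψ-x)/(ψ-y)·exp(-F)` is anti-holomorphic. -/
theorem stmt15 (M : Set ℂ) (hM : IsOpen M) (hconn : IsConnected M)
    (hsc : SimplyConnectedSpace M)
    (P Q R x y ψ F : ℂ → ℂ)
    (hP : DifferentiableOn ℂ P M) (hQ : DifferentiableOn ℂ Q M)
    (hR : DifferentiableOn ℂ R M)
    (hPne : ∀ w ∈ M, P w ≠ 0)
    (hx : DifferentiableOn ℂ x M) (hy : DifferentiableOn ℂ y M)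
    (hxsol : ∀ w ∈ M, deriv x w = P w * x w ^ 2 + Q w * x w + R w)
    (hysol : ∀ w ∈ M, deriv y w = P w * y w ^ 2 + Q w * y w + R w)
    (hxy : ∀ w ∈ M, x w ≠ y w)
    (hψ : ContDiffOn ℝ (⊤ : ℕ∞) ψ M)
    (hψx : ∀ w ∈ M, ψ w ≠ x w) (hψy : ∀ w ∈ M, ψ w ≠ y w)
    (hF : DifferentiableOn ℂ F M)
    (hF' : ∀ w ∈ M, deriv F w = P w * (x w - y w))
    (w₀ : ℂ) (hw₀ : w₀ ∈ M) (hF0 : F w₀ = 0) :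
    (∀ w ∈ M, wd ψ w = P w * ψ w ^ 2 + Q w * ψ w + R w) ↔
    (∀ w ∈ M,
      wd (fun z => (ψ z - x z) / (ψ z - y z) * Complex.exp (-F z)) w = 0) := by
  -- Pointwise equivalence
  have main : ∀ w ∈ M,
      (wd ψ w = P w * ψ w ^ 2 + Q w * ψ w + R w ↔
        wd (fun z => (ψ z - x z) / (ψ z - y z) * Complex.exp (-F z)) w = 0) := by
    intro w hw
    have hMw : M ∈ nhds w := hM.mem_nhds hw
    have hLψ : HasFDerivAt ψ (fderiv ℝ ψ w) w :=
      (((hψ.contDiffAt hMw).differentiableAt (by simp))).hasFDerivAt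
    have hxd : HasDerivAt x (deriv x w) w :=
      (((hx w hw).differentiableAt hMw)).hasDerivAt
    have hyd : HasDerivAt y (deriv y w) w :=
      (((hy w hw).differentiableAt hMw)).hasDerivAt
    have hFd : HasDerivAt F (deriv F w) w :=
      (((hF w hw).differentiableAt hMw)).hasDerivAt
    have hvy : ψ w - y w ≠ 0 := sub_ne_zero.2 (hψy w hw)
    have hvx : ψ w - x w ≠ 0 := sub_ne_zero.2 (hψx w hw)
    have hxyw : x w - y w ≠ 0 := sub_ne_zero.2 (hxy w hw)
    have hkey := key hLψ hxd hyd hFd hvy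
    rw [hxsol w hw, hysol w hw, hF' w hw] at hkey
    have hfact : wd (fun z => (ψ z - x z) / (ψ z - y z) * Complex.exp (-F z)) w =
        Complex.exp (-F w) * ((ψ w - y w) ^ 2)⁻¹ * (x w - y w) *
          (wd ψ w - (P w * ψ w ^ 2 + Q w * ψ w + R w)) := by
      rw [hkey]
      field_simp
      ring
    rw [hfact]
    have hne : Complex.exp (-F w) * ((ψ w - y w) ^ 2)⁻¹ * (x w - y w) ≠ 0 := by
      apply mul_ne_zero (mul_ne_zero (Complex.exp_ne_zero _) _) hxyw
      exact inv_ne_zero (pow_ne_zero 2 hvy)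
    constructor
    · intro h; rw [h]; ring
    · intro h
      rcases mul_eq_zero.1 h with h1 | h2
      · exact absurd h1 hne
      · exact sub_eq_zero.1 h2
  constructor
  · intro h w hw; exact (main w hw).1 (h w hw)
  · intro h w hw; exact (main w hw).2 (h w hw)
end

section
/- Let M ⊆ C be open, connected and simply connected, P, a : M → C holomorphic with P nowhere zero, and let x, y : M → C be two distinct holomorphic solutions of φ_w = P·(a - φ)², i.e. x_w = P(a-x)² and y_w = P(a-y)². Fix w₀ ∈ M, λ₀, ρ₀ > 0, and define λ(w) = λ₀·exp(2 Re ∫_{w₀}^{w} P(ξ)(a(ξ)-x(ξ)) dξ) and ρ(w) = ρ₀·exp(2 Re ∫_{w₀}^{w} P(ξ)(a(ξ)-y(ξ)) dξ). Then the function r(w) = λ(w)·ρ(w)·(x(w)-y(w))·conj(x(w)-y(w)) is constant on M. -/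
namespace Complex

theorem normSq_exp_mul (z u : ℂ) : normSq (exp z * u) = Real.exp (2 * z.re) * normSq u := by
  rw [normSq_mul, normSq_eq_norm_sq, norm_exp, ← Real.exp_nat_mul]
  norm_num

theorem hasDerivAt_exp_add_mul_sub_eq_zero {F G x y : ℂ → ℂ} {p a w : ℂ}
    (hF : HasDerivAt F (p * (a - x w)) w) (hG : HasDerivAt G (p * (a - y w)) w)
    (hx : HasDerivAt x (p * (a - x w) ^ 2) w) (hy : HasDerivAt y (p * (a - y w) ^ 2) w) :
    HasDerivAt (fun z => exp (F z + G z) * (x z - y z)) 0 w :=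
  (((hF.fun_add hG).cexp).fun_mul (hx.fun_sub hy)).congr_deriv (by ring)

end Complex

theorem stmt16_general (M : Set ℂ) (hM : IsOpen M) (hconn : IsConnected M)
    (P a x y F G : ℂ → ℂ)
    (hx : DifferentiableOn ℂ x M) (hy : DifferentiableOn ℂ y M)
    (hxsol : ∀ w ∈ M, deriv x w = P w * (a w - x w) ^ 2)
    (hysol : ∀ w ∈ M, deriv y w = P w * (a w - y w) ^ 2)
    (hF : DifferentiableOn ℂ F M)
    (hF' : ∀ w ∈ M, deriv F w = P w * (a w - x w))
    (hG : DifferentiableOn ℂ G M)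
    (hG' : ∀ w ∈ M, deriv G w = P w * (a w - y w))
    (lam0 rho0 : ℝ) :
    ∀ w ∈ M, ∀ w' ∈ M,
      lam0 * Real.exp (2 * (F w).re) * (rho0 * Real.exp (2 * (G w).re)) *
        Complex.normSq (x w - y w) =
      lam0 * Real.exp (2 * (F w').re) * (rho0 * Real.exp (2 * (G w').re)) *
        Complex.normSq (x w' - y w') := by
  set H : ℂ → ℂ := fun z => Complex.exp (F z + G z) * (x z - y z)
  have hH : ∀ z ∈ M, HasDerivAt H 0 z := by
    intro z hz
    have hd {f : ℂ → ℂ} (hf : DifferentiableOn ℂ f M) : HasDerivAt f (deriv f z) z :=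
      (hf.differentiableAt (hM.mem_nhds hz)).hasDerivAt
    exact Complex.hasDerivAt_exp_add_mul_sub_eq_zero (hF' z hz ▸ hd hF) (hG' z hz ▸ hd hG)
      (hxsol z hz ▸ hd hx) (hysol z hz ▸ hd hy)
  have hr (z : ℂ) : lam0 * Real.exp (2 * (F z).re) * (rho0 * Real.exp (2 * (G z).re)) *
      Complex.normSq (x z - y z) = lam0 * rho0 * Complex.normSq (H z) := by
    rw [Complex.normSq_exp_mul, Complex.add_re, mul_add, Real.exp_add]
    ring
  intro w hw w' hw'
  rw [hr, hr, hM.is_const_of_deriv_eq_zero hconn.isPreconnected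
    (fun z hz => (hH z hz).differentiableAt.differentiableWithinAt) (fun z hz => (hH z hz).deriv)
    hw hw']

/-- `F, G` are the primitives of `P(a-x)`, `P(a-y)` (existing by
simple connectivity), `λ = λ₀ e^{2 Re F}`, `ρ = ρ₀ e^{2 Re G}`; then
`r = λρ|x-y|²` is constant on `M`. -/
theorem stmt16 (M : Set ℂ) (hM : IsOpen M) (hconn : IsConnected M)
    (hsc : SimplyConnectedSpace M)
    (P a x y F G : ℂ → ℂ)
    (hP : DifferentiableOn ℂ P M) (ha : DifferentiableOn ℂ a M)
    (hPne : ∀ w ∈ M, P w ≠ 0)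
    (hx : DifferentiableOn ℂ x M) (hy : DifferentiableOn ℂ y M)
    (hxsol : ∀ w ∈ M, deriv x w = P w * (a w - x w) ^ 2)
    (hysol : ∀ w ∈ M, deriv y w = P w * (a w - y w) ^ 2)
    (hxy : ∀ w ∈ M, x w ≠ y w)
    (hF : DifferentiableOn ℂ F M)
    (hF' : ∀ w ∈ M, deriv F w = P w * (a w - x w))
    (hG : DifferentiableOn ℂ G M)
    (hG' : ∀ w ∈ M, deriv G w = P w * (a w - y w))
    (w₀ : ℂ) (hw₀ : w₀ ∈ M) (hF0 : F w₀ = 0) (hG0 : G w₀ = 0)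
    (lam0 rho0 : ℝ) (hlam0 : 0 < lam0) (hrho0 : 0 < rho0) :
    ∀ w ∈ M, ∀ w' ∈ M,
      lam0 * Real.exp (2 * (F w).re) * (rho0 * Real.exp (2 * (G w).re)) *
        Complex.normSq (x w - y w) =
      lam0 * Real.exp (2 * (F w').re) * (rho0 * Real.exp (2 * (G w').re)) *
        Complex.normSq (x w' - y w') :=
  stmt16_general M hM hconn P a x y F G hx hy hxsol hysol hF hF' hG hG' lam0 rho0
end

section
/- Let M ⊆ C be open, a : M → C holomorphic and nonconstant, and b : M → C smooth and nowhere zero with b_w ≠ 0 ≠ b_w̄ and 1 - b·conj(a) ≠ 0 on M. Suppose b satisfies the PDE b_ww̄ + (2·conj(a)/(1 - b·conj(a)))·b_w·b_w̄ = 0. Then φ := 1/conj(b) satisfies the partial Riccati equation φ_w = P·(φ - a)² where P = -(conj(b))_w/(1 - a·conj(b))², and P is holomorphic on M. -/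
section helpers
open Complex

lemma wd_eq' {f : ℂ → ℂ} {L : ℂ →L[ℝ] ℂ} {x : ℂ} (h : HasFDerivAt f L x) :
    wd f x = (L 1 - Complex.I * L Complex.I) / 2 := by rw [wd, h.fderiv]

lemma wdbar_eq' {f : ℂ → ℂ} {L : ℂ →L[ℝ] ℂ} {x : ℂ} (h : HasFDerivAt f L x) :
    wdbar f x = (L 1 + Complex.I * L Complex.I) / 2 := by rw [wdbar, h.fderiv]

lemma wdbar_mul' {f g : ℂ → ℂ} {x : ℂ} (hf : DifferentiableAt ℝ f x)
    (hg : DifferentiableAt ℝ g x) :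
    wdbar (fun z => f z * g z) x = wdbar f x * g x + f x * wdbar g x := by
  simp only [wdbar, fderiv_fun_mul hf hg, ContinuousLinearMap.add_apply,
    ContinuousLinearMap.smul_apply, smul_eq_mul]
  ring

lemma wd_conj' {f : ℂ → ℂ} {x : ℂ} (hf : DifferentiableAt ℝ f x) :
    wd (fun z => starRingEnd ℂ (f z)) x = starRingEnd ℂ (wdbar f x) := by
  have h : HasFDerivAt (fun z => starRingEnd ℂ (f z))
      ((Complex.conjCLE : ℂ ≃L[ℝ] ℂ).toContinuousLinearMap.comp (fderiv ℝ f x)) x :=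
    (Complex.conjCLE.toContinuousLinearMap.hasFDerivAt).comp x hf.hasFDerivAt
  rw [wd_eq' h, wdbar]
  simp [Complex.conjCLE_apply, map_add, map_mul, map_div₀, map_ofNat]
  ring

lemma wdbar_conj' {f : ℂ → ℂ} {x : ℂ} (hf : DifferentiableAt ℝ f x) :
    wdbar (fun z => starRingEnd ℂ (f z)) x = starRingEnd ℂ (wd f x) := by
  have h : HasFDerivAt (fun z => starRingEnd ℂ (f z))
      ((Complex.conjCLE : ℂ ≃L[ℝ] ℂ).toContinuousLinearMap.comp (fderiv ℝ f x)) x :=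
    (Complex.conjCLE.toContinuousLinearMap.hasFDerivAt).comp x hf.hasFDerivAt
  rw [wdbar_eq' h, wd]
  simp [Complex.conjCLE_apply, map_add, map_mul, map_div₀, map_ofNat]

lemma wd_inv' {f : ℂ → ℂ} {x : ℂ} (hf : DifferentiableAt ℝ f x) (h0 : f x ≠ 0) :
    wd (fun z => (f z)⁻¹) x = -(wd f x) / f x ^ 2 := by
  have h : HasFDerivAt (fun z => (f z)⁻¹)
      (((ContinuousLinearMap.smulRight (1 : ℂ →L[ℂ] ℂ) (-(f x ^ 2)⁻¹)).restrictScalars ℝ).comp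
        (fderiv ℝ f x)) x :=
    ((hasFDerivAt_inv h0).restrictScalars ℝ).comp x hf.hasFDerivAt
  rw [wd_eq' h, wd]
  simp only [ContinuousLinearMap.coe_comp', Function.comp_apply,
    ContinuousLinearMap.coe_restrictScalars', ContinuousLinearMap.smulRight_apply,
    ContinuousLinearMap.one_apply, smul_eq_mul]
  field_simp
  ring

lemma wdbar_inv' {f : ℂ → ℂ} {x : ℂ} (hf : DifferentiableAt ℝ f x) (h0 : f x ≠ 0) :
    wdbar (fun z => (f z)⁻¹) x = -(wdbar f x) / f x ^ 2 := by
  have h : HasFDerivAt (fun z => (f z)⁻¹)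
      (((ContinuousLinearMap.smulRight (1 : ℂ →L[ℂ] ℂ) (-(f x ^ 2)⁻¹)).restrictScalars ℝ).comp
        (fderiv ℝ f x)) x :=
    ((hasFDerivAt_inv h0).restrictScalars ℝ).comp x hf.hasFDerivAt
  rw [wdbar_eq' h, wdbar]
  simp only [ContinuousLinearMap.coe_comp', Function.comp_apply,
    ContinuousLinearMap.coe_restrictScalars', ContinuousLinearMap.smulRight_apply,
    ContinuousLinearMap.one_apply, smul_eq_mul]
  field_simp
  ring

lemma wdbar_neg' {f : ℂ → ℂ} {x : ℂ} :
    wdbar (fun z => -(f z)) x = -(wdbar f x) := by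
  simp [wdbar, fderiv_neg]; ring

lemma wdbar_const_sub' {f : ℂ → ℂ} {x : ℂ} (hf : DifferentiableAt ℝ f x) (c : ℂ) :
    wdbar (fun z => c - f z) x = -(wdbar f x) := by
  have h : HasFDerivAt (fun z => c - f z) (-(fderiv ℝ f x)) x :=
    hf.hasFDerivAt.const_sub c
  rw [wdbar_eq' h, wdbar]
  simp only [ContinuousLinearMap.neg_apply]
  ring

lemma wdbar_holo' {f : ℂ → ℂ} {x : ℂ} (hf : DifferentiableAt ℂ f x) :
    wdbar f x = 0 := by
  have e : fderiv ℝ f x = (fderiv ℂ f x).restrictScalars ℝ := hf.fderiv_restrictScalars ℝ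
  rw [wdbar, e]
  have h : fderiv ℂ f x Complex.I = Complex.I * fderiv ℂ f x 1 := by
    simpa [smul_eq_mul] using (fderiv ℂ f x).map_smul Complex.I (1 : ℂ)
  simp [h]
  linear_combination (deriv f x) * Complex.I_sq

lemma second_mixed' {b : ℂ → ℂ} {w : ℂ} (hbAt : ContDiffAt ℝ (⊤ : ℕ∞) b w) :
    DifferentiableAt ℝ (fun z => wdbar b z) w ∧
    wd (fun z => wdbar b z) w = wdbar (fun z => wd b z) w := by
  have hF : DifferentiableAt ℝ (fderiv ℝ b) w :=
    (hbAt.fderiv_right (m := 1) (WithTop.coe_le_coe.mpr le_top)).differentiableAt one_ne_zero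
  set D2 := fderiv ℝ (fderiv ℝ b) w with hD2def
  have hD2 : HasFDerivAt (fderiv ℝ b) D2 w := hF.hasFDerivAt
  have hsym : D2 1 Complex.I = D2 Complex.I 1 :=
    (hbAt.isSymmSndFDerivAt (by
      rw [minSmoothness_of_isRCLikeNormedField]; exact WithTop.coe_le_coe.mpr le_top)) 1 Complex.I
  have h1 : HasFDerivAt (fun z => fderiv ℝ b z 1)
      ((ContinuousLinearMap.apply ℝ ℂ (1:ℂ)).comp D2) w :=
    (ContinuousLinearMap.apply ℝ ℂ (1:ℂ)).hasFDerivAt.comp w hD2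
  have hI : HasFDerivAt (fun z => fderiv ℝ b z Complex.I)
      ((ContinuousLinearMap.apply ℝ ℂ (Complex.I)).comp D2) w :=
    (ContinuousLinearMap.apply ℝ ℂ (Complex.I)).hasFDerivAt.comp w hD2
  have hg : HasFDerivAt (fun z => wdbar b z)
      ((2:ℂ)⁻¹ • (((ContinuousLinearMap.apply ℝ ℂ (1:ℂ)).comp D2) +
        Complex.I • ((ContinuousLinearMap.apply ℝ ℂ (Complex.I)).comp D2))) w := by
    have := ((h1.add (hI.const_mul Complex.I)).const_mul ((2:ℂ)⁻¹))
    simp only [wdbar, div_eq_inv_mul]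
    exact this
  have hwd : HasFDerivAt (fun z => wd b z)
      ((2:ℂ)⁻¹ • (((ContinuousLinearMap.apply ℝ ℂ (1:ℂ)).comp D2) -
        Complex.I • ((ContinuousLinearMap.apply ℝ ℂ (Complex.I)).comp D2))) w := by
    have := ((h1.sub (hI.const_mul Complex.I)).const_mul ((2:ℂ)⁻¹))
    simp only [wd, div_eq_inv_mul]
    exact this
  refine ⟨hg.differentiableAt, ?_⟩
  rw [wd_eq' hg, wdbar_eq' hwd]
  simp only [ContinuousLinearMap.smul_apply, ContinuousLinearMap.add_apply,
    ContinuousLinearMap.sub_apply, ContinuousLinearMap.coe_comp', Function.comp_apply,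
    ContinuousLinearMap.apply_apply, smul_eq_mul]
  rw [hsym]
  ring

lemma diff_complex_of_wdbar_zero' {f : ℂ → ℂ} {x : ℂ} (hf : DifferentiableAt ℝ f x)
    (h : wdbar f x = 0) : DifferentiableAt ℂ f x := by
  set L := fderiv ℝ f x with hL
  have e : L 1 + Complex.I * L Complex.I = 0 := by
    have h2 := h
    rw [wdbar] at h2
    field_simp at h2
    rw [mul_zero] at h2
    exact h2
  have hLI : L Complex.I = Complex.I * L 1 := by
    linear_combination (-Complex.I) * e + (L Complex.I) * Complex.I_sq
  rw [differentiableAt_iff_restrictScalars ℝ hf]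
  refine ⟨(L 1) • (1 : ℂ →L[ℂ] ℂ), ?_⟩
  ext z
  have hzdec : L z = z.re • L 1 + z.im • L Complex.I := by
    have hz : z = z.re • (1:ℂ) + z.im • Complex.I := by
      simp [Complex.real_smul, Complex.re_add_im]
    calc L z = L (z.re • (1:ℂ) + z.im • Complex.I) := by rw [← hz]
    _ = z.re • L 1 + z.im • L Complex.I := by rw [map_add, map_smul, map_smul]
  simp only [ContinuousLinearMap.coe_restrictScalars', ContinuousLinearMap.smul_apply,
    ContinuousLinearMap.one_apply, smul_eq_mul]
  rw [← hL, hzdec, hLI]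
  simp only [Complex.real_smul, smul_eq_mul]
  conv_lhs => rw [← Complex.re_add_im z]
  ring

end helpers

theorem stmt19 (M : Set ℂ) (hM : IsOpen M)
    (a b : ℂ → ℂ)
    (ha : DifferentiableOn ℂ a M)
    (hanc : ¬ ∀ w ∈ M, ∀ w' ∈ M, a w = a w')
    (hb : ContDiffOn ℝ (⊤ : ℕ∞) b M)
    (hbw : ∀ w ∈ M, wd b w ≠ 0) (hbwb : ∀ w ∈ M, wdbar b w ≠ 0)
    (hbne : ∀ w ∈ M, b w ≠ 0)
    (hne : ∀ w ∈ M, 1 - b w * starRingEnd ℂ (a w) ≠ 0)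
    (hpde : ∀ w ∈ M,
      wdbar (fun z => wd b z) w +
        (2 * starRingEnd ℂ (a w) / (1 - b w * starRingEnd ℂ (a w))) *
          (wd b w * wdbar b w) = 0) :
    (∀ w ∈ M,
      wd (fun z => 1 / starRingEnd ℂ (b z)) w =
        (-(wd (fun z => starRingEnd ℂ (b z)) w) /
            (1 - a w * starRingEnd ℂ (b w)) ^ 2) *
          (1 / starRingEnd ℂ (b w) - a w) ^ 2) ∧
    DifferentiableOn ℂ
      (fun w => -(wd (fun z => starRingEnd ℂ (b z)) w) /
        (1 - a w * starRingEnd ℂ (b w)) ^ 2) M := by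
  -- basic differentiability facts at points of M
  have hbd : ∀ w ∈ M, DifferentiableAt ℝ b w := fun w hw =>
    (hb.contDiffAt (hM.mem_nhds hw)).differentiableAt (by simp)
  have hcd : ∀ w ∈ M, DifferentiableAt ℝ (fun z => starRingEnd ℂ (b z)) w := by
    intro w hw
    have := (Complex.conjCLE.toContinuousLinearMap.differentiableAt).comp w (hbd w hw)
    simpa [Function.comp_def] using this
  have hc0 : ∀ w ∈ M, starRingEnd ℂ (b w) ≠ 0 := by
    intro w hw; simpa using hbne w hw
  have hu0 : ∀ w ∈ M, (1:ℂ) - a w * starRingEnd ℂ (b w) ≠ 0 := by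
    intro w hw
    have h : (1:ℂ) - starRingEnd ℂ (b w) * a w ≠ 0 := by
      intro h0
      apply hne w hw
      have h1 := congrArg (starRingEnd ℂ) h0
      simpa [map_sub, map_mul, map_one, Complex.conj_conj] using h1
    intro h0; apply h
    linear_combination h0
  constructor
  · -- pointwise Riccati identity
    intro w hw
    have e1 : wd (fun z => starRingEnd ℂ (b z)) w = starRingEnd ℂ (wdbar b w) :=
      wd_conj' (hbd w hw)
    have honediv : (fun z => 1 / starRingEnd ℂ (b z)) = fun z => (starRingEnd ℂ (b z))⁻¹ := by
      funext z; rw [one_div]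
    rw [honediv, wd_inv' (hcd w hw) (hc0 w hw), e1]
    have h1 := hc0 w hw
    have h2 := hu0 w hw
    have h3 : (1:ℂ) - starRingEnd ℂ (b w) * a w ≠ 0 := by rw [mul_comm]; exact h2
    field_simp
  · -- holomorphy of P
    intro w hw
    apply DifferentiableAt.differentiableWithinAt
    have hbAt : ContDiffAt ℝ (⊤ : ℕ∞) b w := hb.contDiffAt (hM.mem_nhds hw)
    obtain ⟨hgd, hmix⟩ := second_mixed' hbAt
    have had : DifferentiableAt ℂ a w := ha.differentiableAt (hM.mem_nhds hw)
    have hadR : DifferentiableAt ℝ a w := had.restrictScalars ℝ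
    -- the nicer representative P'
    set P' : ℂ → ℂ := fun z => -(starRingEnd ℂ (wdbar b z)) *
      (((1 - a z * starRingEnd ℂ (b z)) * (1 - a z * starRingEnd ℂ (b z)))⁻¹) with hP'def
    have hPP' : (fun z => -(wd (fun y => starRingEnd ℂ (b y)) z) /
        (1 - a z * starRingEnd ℂ (b z)) ^ 2) =ᶠ[nhds w] P' := by
      filter_upwards [hM.mem_nhds hw] with z hz
      rw [hP'def]
      rw [wd_conj' (hbd z hz)]
      rw [div_eq_mul_inv, sq]
    rw [Filter.EventuallyEq.differentiableAt_iff hPP']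
    -- differentiability pieces
    have hgc : DifferentiableAt ℝ (fun z => starRingEnd ℂ (wdbar b z)) w := by
      have := (Complex.conjCLE.toContinuousLinearMap.differentiableAt).comp w hgd
      simpa [Function.comp_def] using this
    have hud : DifferentiableAt ℝ (fun z => (1:ℂ) - a z * starRingEnd ℂ (b z)) w := by
      apply DifferentiableAt.const_sub
      exact hadR.mul (hcd w hw)
    have hu2d : DifferentiableAt ℝ
        (fun z => (1 - a z * starRingEnd ℂ (b z)) * (1 - a z * starRingEnd ℂ (b z))) w :=
      hud.mul hud
    have h20 : ((1:ℂ) - a w * starRingEnd ℂ (b w)) * (1 - a w * starRingEnd ℂ (b w)) ≠ 0 :=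
      mul_ne_zero (hu0 w hw) (hu0 w hw)
    have hQd : DifferentiableAt ℝ (fun z =>
        (((1:ℂ) - a z * starRingEnd ℂ (b z)) * (1 - a z * starRingEnd ℂ (b z)))⁻¹) w := by
      have := (((hasFDerivAt_inv h20).restrictScalars ℝ).comp w hu2d.hasFDerivAt)
      exact this.differentiableAt
    have hPd : DifferentiableAt ℝ P' w := (hgc.neg).mul hQd
    apply diff_complex_of_wdbar_zero' hPd
    -- compute wdbar P' w
    rw [hP'def]
    rw [wdbar_mul' (f := fun z => -(starRingEnd ℂ (wdbar b z))) hgc.neg hQd]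
    rw [show (fun z => -(starRingEnd ℂ (wdbar b z))) = fun z => -((fun y => starRingEnd ℂ (wdbar b y)) z) from rfl]
    rw [wdbar_neg']
    rw [wdbar_conj' hgd, hmix]
    rw [wdbar_inv' hu2d h20]
    rw [wdbar_mul' hud hud]
    rw [wdbar_const_sub' (f := fun z => a z * starRingEnd ℂ (b z)) (hadR.mul (hcd w hw)) 1]
    rw [wdbar_mul' hadR (hcd w hw)]
    rw [wdbar_holo' had]
    rw [wdbar_conj' (hbd w hw)]
    -- now pure algebra with the PDE
    have hS := hpde w hw
    set S := wdbar (fun z => wd b z) w with hSdef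
    set X := wd b w with hXdef
    set Y := wdbar b w with hYdef
    set α := a w with hadef
    set β := b w with hbdef
    have h1 : S * (1 - β * starRingEnd ℂ α) = -(2 * starRingEnd ℂ α * (X * Y)) := by
      have hden : (1:ℂ) - β * starRingEnd ℂ α ≠ 0 := hne w hw
      rw [div_mul_eq_mul_div, add_div' _ _ _ hden, div_eq_zero_iff] at hS
      linear_combination hS.resolve_right hden
    have h2 : starRingEnd ℂ S * (1 - α * starRingEnd ℂ β) =
        -(2 * α * (starRingEnd ℂ X * starRingEnd ℂ Y)) := by
      have := congrArg (starRingEnd ℂ) h1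
      simp only [map_mul, map_sub, map_neg, map_one, map_ofNat, Complex.conj_conj] at this
      linear_combination this
    have hu : (1:ℂ) - α * starRingEnd ℂ β ≠ 0 := hu0 w hw
    field_simp
    linear_combination (-1 : ℂ) * h2
end
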